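/- arXiv:2405.10735 — 2 statements merged into one kernel-verified Lean document; each statement's English description precedes it below -/
import Mathlib

section
/- Let U ⊆ ℝ^n be a nonempty closed convex set, f a proper closed convex function, ψ a differentiable 1-strongly convex Bregman generating function with distance D, and x⁺ = argmin_{x ∈ U} [ f(x) − ⟨s, x⟩ + t·D(x, x̄) ]. Then for all x ∈ U: f(x⁺) − f(x) + ⟨s, x − x̄⟩ ≤ t(D(x, x̄) − D(x, x⁺)) + (1/(2t))‖s‖². -/
/-!
Testing the first-order optimality of `x⁺` in the direction `x - x⁺` gives
`f x⁺ - f x + ⟪s, x - x⁺⟫ ≤ t ⟪∇ψ x⁺ - ∇ψ x̄, x - x⁺⟫`, and the three-point identity turns the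
right-hand side into `t (D(x, x̄) - D(x, x⁺) - D(x⁺, x̄))`. Strong convexity of `ψ` gives
`D(x⁺, x̄) ≥ ‖x⁺ - x̄‖² / 2`, which absorbs the remaining term `⟪s, x⁺ - x̄⟫` by Young's inequality.
-/

open Filter Topology Set InnerProductSpace
open scoped RealInnerProductSpace Gradient

section NormedSpace

variable {E : Type*} [NormedAddCommGroup E] [NormedSpace ℝ E]

theorem HasFDerivAt.tendsto_slope_along {h : E → ℝ} {h' : E →L[ℝ] ℝ} {a : E}
    (hh : HasFDerivAt h h' a) (v : E) :
    Tendsto (fun l : ℝ => (h (a + l • v) - h a) / l) (𝓝[>] 0) (𝓝 (h' v)) := by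
  have hline : HasDerivAt (fun l : ℝ => a + l • v) v 0 := by
    simpa using ((hasDerivAt_id (0 : ℝ)).smul_const v).const_add a
  have hcomp : HasDerivAt (fun l : ℝ => h (a + l • v)) (h' v) 0 :=
    (by simpa using hh : HasFDerivAt h h' (a + (0 : ℝ) • v)).comp_hasDerivAt 0 hline
  simpa [div_eq_inv_mul] using hcomp.tendsto_slope_zero_right

theorem ConvexOn.sub_le_fderiv_of_isMinOn_add {U : Set E} {g h : E → ℝ} {h' : E →L[ℝ] ℝ}
    {a x : E} (hg : ConvexOn ℝ U g) (hh : HasFDerivAt h h' a)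
    (hmin : IsMinOn (fun z => g z + h z) U a) (ha : a ∈ U) (hx : x ∈ U) :
    g a - g x ≤ h' (x - a) := by
  refine ge_of_tendsto (hh.tendsto_slope_along (x - a)) ?_
  filter_upwards [Ioc_mem_nhdsGT (zero_lt_one' ℝ)] with l ⟨hl0, hl1⟩
  have hseg : (1 - l) • a + l • x = a + l • (x - a) := by module
  have hmem : a + l • (x - a) ∈ U := hseg ▸ hg.1 ha hx (by linarith) hl0.le (sub_add_cancel 1 l)
  have hconv : g (a + l • (x - a)) ≤ (1 - l) * g a + l * g x := by
    simpa [hseg] using hg.2 ha hx (by linarith) hl0.le (sub_add_cancel 1 l)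
  have hopt : g a + h a ≤ g (a + l • (x - a)) + h (a + l • (x - a)) := hmin hmem
  rw [le_div_iff₀ hl0]
  linarith

theorem StrongConvexOn.add_fderiv_add_le {s : Set E} {m : ℝ} {ψ : E → ℝ} {ψ' : E →L[ℝ] ℝ}
    {x y : E} (hψ : StrongConvexOn s m ψ) (hd : HasFDerivAt ψ ψ' y) (hx : x ∈ s) (hy : y ∈ s) :
    ψ y + ψ' (x - y) + m / 2 * ‖x - y‖ ^ 2 ≤ ψ x := by
  have hlim : Tendsto (fun l : ℝ => ψ x - ψ y - (1 - l) * (m / 2 * ‖x - y‖ ^ 2)) (𝓝[>] 0)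
      (𝓝 (ψ x - ψ y - (1 - 0) * (m / 2 * ‖x - y‖ ^ 2))) :=
    (Continuous.tendsto (by fun_prop) 0).mono_left nhdsWithin_le_nhds
  have := le_of_tendsto_of_tendsto (hd.tendsto_slope_along (x - y)) hlim ?_
  · linarith
  filter_upwards [Ioo_mem_nhdsGT (zero_lt_one' ℝ)] with l ⟨hl0, hl1⟩
  have hseg : l • x + (1 - l) • y = y + l • (x - y) := by module
  have h := hψ.2 hx hy hl0.le (by linarith) (add_sub_cancel l 1)
  rw [hseg, smul_eq_mul, smul_eq_mul] at h
  rw [div_le_iff₀ hl0]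
  linarith

end NormedSpace

section InnerProductSpace

variable {F : Type*} [NormedAddCommGroup F] [InnerProductSpace ℝ F] [CompleteSpace F]

noncomputable def bregmanDiv (ψ : F → ℝ) (x y : F) : ℝ := ψ x - ψ y - ⟪∇ ψ y, x - y⟫_ℝ

theorem hasGradientAt_bregmanDiv {ψ : F → ℝ} {x : F} (hd : DifferentiableAt ℝ ψ x) (y : F) :
    HasGradientAt (fun z => bregmanDiv ψ z y) (∇ ψ x - ∇ ψ y) x := by
  rw [hasGradientAt_iff_hasFDerivAt, map_sub, toDual_gradient]
  have hlin : HasFDerivAt (fun z => ⟪∇ ψ y, z - y⟫_ℝ) (toDual ℝ F (∇ ψ y)) x := by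
    simpa [inner_sub_right] using (toDual ℝ F (∇ ψ y)).hasFDerivAt.sub_const ⟪∇ ψ y, y⟫_ℝ
  exact (hd.hasFDerivAt.sub_const (ψ y)).sub hlin

theorem bregmanDiv_three_point (ψ : F → ℝ) (x y z : F) :
    ⟪∇ ψ y - ∇ ψ z, x - y⟫_ℝ = bregmanDiv ψ x z - bregmanDiv ψ x y - bregmanDiv ψ y z := by
  simp only [bregmanDiv, inner_sub_left, inner_sub_right]
  ring

theorem StrongConvexOn.mul_sq_norm_le_bregmanDiv {s : Set F} {m : ℝ} {ψ : F → ℝ} {x y : F}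
    (hψ : StrongConvexOn s m ψ) (hd : DifferentiableAt ℝ ψ y) (hx : x ∈ s) (hy : y ∈ s) :
    m / 2 * ‖x - y‖ ^ 2 ≤ bregmanDiv ψ x y := by
  have := hψ.add_fderiv_add_le hd.hasFDerivAt hx hy
  rw [bregmanDiv, inner_gradient_left]
  linarith

end InnerProductSpace

theorem real_inner_le_young {F : Type*} [NormedAddCommGroup F] [InnerProductSpace ℝ F]
    (s u : F) {t : ℝ} (ht : 0 < t) : ⟪s, u⟫_ℝ ≤ 1 / (2 * t) * ‖s‖ ^ 2 + t / 2 * ‖u‖ ^ 2 := by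
  have hsq := norm_sub_sq_real s (t • u)
  rw [real_inner_smul_right, norm_smul, mul_pow, Real.norm_eq_abs, sq_abs] at hsq
  have hrhs : 1 / (2 * t) * ‖s‖ ^ 2 + t / 2 * ‖u‖ ^ 2 = (‖s‖ ^ 2 + t ^ 2 * ‖u‖ ^ 2) / (2 * t) := by
    field_simp
  rw [hrhs, le_div_iff₀ (by positivity)]
  nlinarith [sq_nonneg ‖s - t • u‖]

theorem bregman_prox_descent_general
    {n : ℕ} (U : Set (EuclideanSpace ℝ (Fin n)))
    (f : EuclideanSpace ℝ (Fin n) → ℝ) (hf : ConvexOn ℝ U f)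
    (ψ : EuclideanSpace ℝ (Fin n) → ℝ) (hdiff : Differentiable ℝ ψ)
    (hsc : StrongConvexOn Set.univ 1 ψ)
    (D : EuclideanSpace ℝ (Fin n) → EuclideanSpace ℝ (Fin n) → ℝ)
    (hD : ∀ x y, D x y = ψ x - ψ y - (inner ℝ (gradient ψ y) (x - y) : ℝ))
    (xb : EuclideanSpace ℝ (Fin n))
    (s : EuclideanSpace ℝ (Fin n)) (t : ℝ) (ht : 0 < t)
    (xp : EuclideanSpace ℝ (Fin n)) (hxp : xp ∈ U)
    (hmin : IsMinOn (fun x => f x - (inner ℝ s x : ℝ) + t * D x xb) U xp) :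
    ∀ x ∈ U, f xp - f x + (inner ℝ s (x - xb) : ℝ)
      ≤ t * (D x xb - D x xp) + (1 / (2 * t)) * ‖s‖ ^ 2 := by
  intro x hx
  obtain rfl : D = bregmanDiv ψ := funext₂ hD
  have hgrad := (hasGradientAt_iff_hasFDerivAt.mp
    (hasGradientAt_bregmanDiv (hdiff xp) xb)).const_mul t
  have hopt :=
    (hf.sub ((innerₛₗ ℝ s).concaveOn hf.1)).sub_le_fderiv_of_isMinOn_add hgrad hmin hxp hx
  simp only [Pi.sub_apply, coe_innerₛₗ_apply, smul_apply, toDual_apply_apply, smul_eq_mul] at hopt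
  rw [bregmanDiv_three_point] at hopt
  have hstrong := hsc.mul_sq_norm_le_bregmanDiv (hdiff xb) (mem_univ xp) (mem_univ xb)
  have hyoung := real_inner_le_young s (xp - xb) ht
  have hsplit : ⟪s, x - xb⟫_ℝ = ⟪s, x⟫_ℝ - ⟪s, xp⟫_ℝ + ⟪s, xp - xb⟫_ℝ := by
    rw [inner_sub_right, inner_sub_right]
    ring
  linarith [mul_le_mul_of_nonneg_left hstrong ht.le]

theorem bregman_prox_descent
    {n : ℕ} (U : Set (EuclideanSpace ℝ (Fin n)))
    (hUne : U.Nonempty) (hUc : IsClosed U) (hUconv : Convex ℝ U)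
    (f : EuclideanSpace ℝ (Fin n) → ℝ) (hf : ConvexOn ℝ U f)
    (ψ : EuclideanSpace ℝ (Fin n) → ℝ) (hdiff : Differentiable ℝ ψ)
    (hsc : StrongConvexOn Set.univ 1 ψ)
    (D : EuclideanSpace ℝ (Fin n) → EuclideanSpace ℝ (Fin n) → ℝ)
    (hD : ∀ x y, D x y = ψ x - ψ y - (inner ℝ (gradient ψ y) (x - y) : ℝ))
    (xb : EuclideanSpace ℝ (Fin n)) (hxb : xb ∈ U)
    (s : EuclideanSpace ℝ (Fin n)) (t : ℝ) (ht : 0 < t)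
    (xp : EuclideanSpace ℝ (Fin n)) (hxp : xp ∈ U)
    (hmin : IsMinOn (fun x => f x - (inner ℝ s x : ℝ) + t * D x xb) U xp) :
    ∀ x ∈ U, f xp - f x + (inner ℝ s (x - xb) : ℝ)
      ≤ t * (D x xb - D x xp) + (1 / (2 * t)) * ‖s‖ ^ 2 :=
  bregman_prox_descent_general U f hf ψ hdiff hsc D hD xb s t ht xp hxp hmin
end

section
/- Let ψ be a 1-strongly convex differentiable function with Bregman distance D, F an L-Lipschitz operator, β ∈ [0,1], and r̄_K = F(x_K) − (1−β)F(x_{K−1}) − βF(x̃_{K−1}) where x̃_{K−1} = (1/q)∑_{j∈J} x_j for an index block J of size q. Then for any x: ⟨r̄_K, x_K − x⟩ ≤ (1−β)L·D(x_K, x_{K−1}) + (βL/q)∑_{j∈J} D(x_K, x_j) + L·D(x, x_K). -/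
/-!
Write `r̄_K = (1 - β) (F x_K - F x_{K-1}) + β (F x_K - F x̃_{K-1})`. Pairing each difference
`F x_K - F y` with `x_K - x` and using Cauchy–Schwarz, the Lipschitz bound and Young's inequality
gives at most `L/2 (‖x_K - y‖² + ‖x_K - x‖²)`. Strong convexity of `ψ` gives
`‖u - v‖² ≤ 2 D(u, v)`, and for the averaged point `x̃_{K-1}` Jensen's inequality for `‖·‖²`
bounds `‖x_K - x̃_{K-1}‖²` by the average of the `‖x_K - x_j‖²`.
-/

open Set Finset
open scoped RealInnerProductSpace

section

variable {E : Type*} [NormedAddCommGroup E] [NormedSpace ℝ E]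

theorem ConvexOn.apply_sub_le_of_hasFDerivAt {s : Set E} {g : E → ℝ}
    {g' : E →L[ℝ] ℝ} {u v : E} (hg : ConvexOn ℝ s g) (hu : u ∈ s) (hv : v ∈ s)
    (hd : HasFDerivAt g g' v) : g' (u - v) ≤ g u - g v := by
  let ℓ : ℝ →ᵃ[ℝ] E := AffineMap.lineMap v u
  have hℓ0 : ℓ 0 = v := AffineMap.lineMap_apply_zero v u
  have hℓ1 : ℓ 1 = u := AffineMap.lineMap_apply_one v u
  have hline : ConvexOn ℝ (ℓ ⁻¹' s) (g ∘ ℓ) := hg.comp_affineMap ℓ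
  have hderiv : HasDerivAt (g ∘ ℓ) (g' (u - v)) 0 :=
    hd.comp_hasDerivAt_of_eq 0 AffineMap.hasDerivAt_lineMap hℓ0.symm
  simpa [slope_def_field, hℓ0, hℓ1] using hline.le_slope_of_hasDerivAt
    (by simpa [hℓ0] : (0 : ℝ) ∈ ℓ ⁻¹' s) (by simpa [hℓ1] : (1 : ℝ) ∈ ℓ ⁻¹' s) one_pos hderiv

theorem norm_sub_average_sq_le {ι : Type*} {s : Finset ι} (hs : s.Nonempty) (u : E)
    (x : ι → E) :
    ‖u - (#s : ℝ)⁻¹ • ∑ i ∈ s, x i‖ ^ 2 ≤ (#s : ℝ)⁻¹ * ∑ i ∈ s, ‖u - x i‖ ^ 2 := by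
  have hcard : (#s : ℝ) ≠ 0 := by exact_mod_cast hs.card_ne_zero
  have hnorm_sq : ConvexOn ℝ univ (fun y : E => ‖y‖ ^ 2) :=
    convexOn_univ_norm.pow (fun _ _ => norm_nonneg _) 2
  have havg : u - (#s : ℝ)⁻¹ • ∑ i ∈ s, x i = ∑ i ∈ s, (#s : ℝ)⁻¹ • (u - x i) := by
    rw [← Finset.smul_sum, Finset.sum_sub_distrib, Finset.sum_const, smul_sub,
      ← Nat.cast_smul_eq_nsmul ℝ, smul_smul, inv_mul_cancel₀ hcard, one_smul]
  rw [havg, Finset.mul_sum]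
  exact hnorm_sq.map_sum_le (fun _ _ => by positivity) (by simp [hcard]) (fun _ _ => trivial)

end

section

variable {E : Type*} [NormedAddCommGroup E] [InnerProductSpace ℝ E]

theorem LipschitzWith.inner_sub_le {X : Type*} [PseudoMetricSpace X] {K : NNReal} {F : X → E}
    (hF : LipschitzWith K F) (a b : X) (w : E) :
    ⟪F a - F b, w⟫ ≤ K / 2 * (dist a b ^ 2 + ‖w‖ ^ 2) := by
  have hFab : ‖F a - F b‖ ≤ K * dist a b := by
    rw [← dist_eq_norm]; exact hF.dist_le_mul a b
  calc ⟪F a - F b, w⟫ ≤ ‖F a - F b‖ * ‖w‖ := real_inner_le_norm _ _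
    _ ≤ K * dist a b * ‖w‖ := by gcongr
    _ ≤ K / 2 * (dist a b ^ 2 + ‖w‖ ^ 2) := by
      have := two_mul_le_add_sq (dist a b) ‖w‖
      have hK : (0 : ℝ) ≤ K := K.2
      nlinarith

theorem StrongConvexOn.inner_add_le_of_hasGradientAt [CompleteSpace E] {s : Set E} {m : ℝ}
    {ψ : E → ℝ} {ψ' u v : E} (hψ : StrongConvexOn s m ψ) (hu : u ∈ s) (hv : v ∈ s)
    (hd : HasGradientAt ψ ψ' v) : ⟪ψ', u - v⟫ + m / 2 * ‖u - v‖ ^ 2 ≤ ψ u - ψ v := by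
  -- first-order condition for the convex function `ψ - m/2 ‖·‖²`
  have hconv := strongConvexOn_iff_convex.1 hψ
  have hd' := (hasGradientAt_iff_hasFDerivAt.1 hd).sub
    ((hasStrictFDerivAt_norm_sq v).hasFDerivAt.const_mul (m / 2))
  have key := hconv.apply_sub_le_of_hasFDerivAt hu hv hd'
  have hsq : ‖u‖ ^ 2 = ‖v‖ ^ 2 + 2 * ⟪v, u - v⟫ + ‖u - v‖ ^ 2 := by
    rw [← norm_add_sq_real, add_sub_cancel]
  simp only [sub_apply, InnerProductSpace.toDual_apply_apply, smul_apply, innerSL_apply_apply,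
    smul_eq_mul, nsmul_eq_mul, Nat.cast_ofNat] at key
  rw [hsq] at key
  linarith

end

theorem momentum_final_term_bound
    {d : ℕ} (ψ : EuclideanSpace ℝ (Fin d) → ℝ)
    (hdiff : Differentiable ℝ ψ) (hsc : StrongConvexOn Set.univ 1 ψ)
    (D : EuclideanSpace ℝ (Fin d) → EuclideanSpace ℝ (Fin d) → ℝ)
    (hD : ∀ u v, D u v = ψ u - ψ v - (inner ℝ (gradient ψ v) (u - v) : ℝ))
    (F : EuclideanSpace ℝ (Fin d) → EuclideanSpace ℝ (Fin d))
    (L : ℝ) (hL : 0 ≤ L) (hF : LipschitzWith (Real.toNNReal L) F)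
    (β : ℝ) (hβ : β ∈ Set.Icc (0 : ℝ) 1)
    (q : ℕ) (hq : 1 ≤ q) (J : Finset ℕ) (hJ : J.card = q)
    (xs : ℕ → EuclideanSpace ℝ (Fin d))
    (xK xKm xt : EuclideanSpace ℝ (Fin d))
    (hxt : xt = (q : ℝ)⁻¹ • ∑ j ∈ J, xs j)
    (rb : EuclideanSpace ℝ (Fin d))
    (hrb : rb = F xK - (1 - β) • F xKm - β • F xt) :
    ∀ x, (inner ℝ rb (xK - x) : ℝ) ≤
      (1 - β) * L * D xK xKm
      + (β * L / q) * ∑ j ∈ J, D xK (xs j)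
      + L * D x xK := by
  intro x
  obtain ⟨hβ0, hβ1⟩ := hβ
  subst hJ
  have hβ1' : 0 ≤ 1 - β := sub_nonneg.2 hβ1
  have hbregman : ∀ u v, dist u v ^ 2 ≤ 2 * D u v := fun u v => by
    have := hsc.inner_add_le_of_hasGradientAt (mem_univ u) (mem_univ v) (hdiff v).hasGradientAt
    rw [hD, dist_eq_norm]
    linarith
  have hxt_dist : dist xK xt ^ 2 ≤ (#J : ℝ)⁻¹ * ∑ j ∈ J, 2 * D xK (xs j) := by
    rw [hxt, dist_eq_norm]
    refine (norm_sub_average_sq_le (card_pos.1 hq) xK xs).trans ?_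
    gcongr with j
    rw [← dist_eq_norm]
    exact hbregman xK (xs j)
  have hx_dist : dist xK x ^ 2 ≤ 2 * D x xK := dist_comm x xK ▸ hbregman x xK
  have hA := hF.inner_sub_le xK xKm (xK - x)
  have hB := hF.inner_sub_le xK xt (xK - x)
  rw [Real.coe_toNNReal L hL, ← dist_eq_norm] at hA hB
  calc ⟪rb, xK - x⟫
      = (1 - β) * ⟪F xK - F xKm, xK - x⟫ + β * ⟪F xK - F xt, xK - x⟫ := by
        rw [hrb]; simp only [inner_sub_left, real_inner_smul_left]; ring
    _ ≤ (1 - β) * (L / 2 * (dist xK xKm ^ 2 + dist xK x ^ 2))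
        + β * (L / 2 * (dist xK xt ^ 2 + dist xK x ^ 2)) := by gcongr
    _ ≤ (1 - β) * (L / 2 * (2 * D xK xKm + 2 * D x xK))
        + β * (L / 2 * ((#J : ℝ)⁻¹ * ∑ j ∈ J, 2 * D xK (xs j) + 2 * D x xK)) := by
        gcongr
        exact hbregman xK xKm
    _ = _ := by rw [← mul_sum]; field_simp; ring
end
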